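/- Let F be a subgroup of a group G with the congruence extension property (for every normal subgroup N of F, ⟨N⟩^G ∩ F = N), and suppose F is free of rank 2. Then every countable group C embeds into a quotient of G; i.e., G is SQ-universal. -/

import Mathlib

/-!
Under the congruence extension property the natural map `F ⧸ N → G ⧸ ⟨N⟩^G` is injective for
every normal subgroup `N` of `F`, so every group embedding into a quotient of `F ≅ F₂` embeds
into a quotient of `G`. It remains to prove the Higman–Neumann–Neumann theorem that every
countable group `C` embeds into a quotient of `F₂ = ⟨x, y⟩`, i.e. into a two-generated group.

Enumerate `C = {c₀ = 1, c₁, …}`. In `C ∗ F₂` both families `aₙ = yⁿ x y⁻ⁿ` and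
`bₙ = cₙ · xⁿ y x⁻ⁿ` are free bases of free subgroups: for `aₙ`, map `F₂` to `F(ℤ) ⋊ ℤ`, where
`y` shifts the generators, so that `aₙ ↦ n`; for `bₙ`, kill `C`. The HNN extension with stable
letter `t` conjugating `aₙ` to `bₙ` contains `C`, and is generated by `x` and `t`: first
`y = b₀ = t x t⁻¹`, and then `cₙ = t aₙ t⁻¹ (xⁿ y x⁻ⁿ)⁻¹`.
-/

open Function

/-- `C` embeds into a quotient of `G`: there is a normal subgroup `N` of `G` and an
injective homomorphism `C →* G ⧸ N`. -/
def EmbedsInQuotient (G : Type) [Group G] (C : Type) [Group C] : Prop :=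
  ∃ (N : Subgroup G) (hN : N.Normal),
    letI := hN
    ∃ φ : C →* G ⧸ N, Function.Injective φ

lemma exists_surjective_nat_apply_zero_eq_one (α : Type*) [One α] [Countable α] :
    ∃ e : ℕ → α, Surjective e ∧ e 0 = 1 := by
  obtain ⟨σ, hσ⟩ := exists_surjective_nat α
  refine ⟨fun n => Nat.casesOn n 1 σ, fun c => ?_, rfl⟩
  obtain ⟨n, rfl⟩ := hσ c
  exact ⟨n + 1, rfl⟩

def conjPow {G : Type*} [Group G] (x y : G) (n : ℕ) : G := y ^ n * x * (y ^ n)⁻¹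

namespace FreeGroup

def shiftAut : Multiplicative ℤ →* MulAut (FreeGroup ℤ) where
  toFun m := freeGroupCongr (Equiv.addRight m.toAdd)
  map_one' := by ext; simp
  map_mul' a b := by
    rw [MulAut.mul_def, freeGroupCongr_trans]
    congr 1
    ext k
    simp only [toAdd_mul, Equiv.coe_addRight, Equiv.coe_trans, comp_apply]
    ring

lemma shiftAut_apply_of (m k : ℤ) :
    shiftAut (Multiplicative.ofAdd m) (of k) = of (k + m) := by
  simp [shiftAut]

theorem injective_lift_conjPow {α : Type*} {i j : α} (hij : i ≠ j) :
    Injective (lift (conjPow (of i) (of j))) := by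
  classical
  let Ψ : FreeGroup α →* FreeGroup ℤ ⋊[shiftAut] Multiplicative ℤ :=
    lift fun k => if k = i then .inl (of 0) else .inr (.ofAdd 1)
  have hΨ :
      Ψ.comp (lift (conjPow (of i) (of j))) = SemidirectProduct.inl.comp (map Nat.cast) := by
    refine ext_hom _ _ fun n => ?_
    have hpow : Ψ (of j ^ n) = .inr (.ofAdd (n : ℤ)) := by
      rw [map_pow, lift_apply_of, if_neg hij.symm, ← map_pow, ← ofAdd_nsmul, nsmul_one]
    have hx : Ψ (of i) = .inl (of 0) := by simp [Ψ]
    rw [MonoidHom.comp_apply, MonoidHom.comp_apply, lift_apply_of, map.of, conjPow,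
      _root_.map_mul, _root_.map_mul, _root_.map_inv, hpow, hx, ← _root_.map_inv,
      ← SemidirectProduct.inl_aut, shiftAut_apply_of, zero_add]
  refine Injective.of_comp (f := Ψ) ?_
  rw [← MonoidHom.coe_comp, hΨ, MonoidHom.coe_comp]
  exact SemidirectProduct.inl_injective.comp (map_injective Nat.cast_injective)

end FreeGroup

namespace HigmanNeumannNeumann

open Monoid FreeGroup
open scoped Monoid.Coprod

variable {C : Type} [Group C]

local notation "F₂" => FreeGroup (Fin 2)

def hnnLeft : FreeGroup ℕ →* C ∗ F₂ :=
  Coprod.inr.comp (lift (conjPow (of 0) (of 1)))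

def hnnRight (e : ℕ → C) : FreeGroup ℕ →* C ∗ F₂ :=
  lift fun n => Coprod.inl (e n) * Coprod.inr (conjPow (of 1) (of 0) n)

lemma hnnLeft_injective : Injective (hnnLeft (C := C)) :=
  Coprod.inr_injective.comp (injective_lift_conjPow (by decide))

lemma hnnRight_injective (e : ℕ → C) : Injective (hnnRight e) := by
  have h : (Coprod.lift 1 (MonoidHom.id F₂)).comp (hnnRight e) = lift (conjPow (of 1) (of 0)) :=
    ext_hom _ _ fun n => by simp [hnnRight]
  refine Injective.of_comp (f := Coprod.lift 1 (MonoidHom.id F₂)) ?_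
  rw [← MonoidHom.coe_comp, h]
  exact injective_lift_conjPow (by decide)

lemma hnnLeft_of (n : ℕ) : hnnLeft (C := C) (of n) = Coprod.inr (conjPow (of 0) (of 1) n) :=
  congrArg Coprod.inr lift_apply_of

lemma hnnRight_of (e : ℕ → C) (n : ℕ) :
    hnnRight e (of n) = Coprod.inl (e n) * Coprod.inr (conjPow (of 1) (of 0) n) :=
  lift_apply_of

noncomputable def hnnEquiv (e : ℕ → C) : (hnnLeft (C := C)).range ≃* (hnnRight e).range :=
  (MonoidHom.ofInjective hnnLeft_injective).symm.trans
    (MonoidHom.ofInjective (hnnRight_injective e))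

abbrev HNNGroup (e : ℕ → C) : Type :=
  HNNExtension (C ∗ F₂) (hnnLeft (C := C)).range (hnnRight e).range (hnnEquiv e)

lemma hnnEquiv_apply (e : ℕ → C) (w : FreeGroup ℕ) :
    (hnnEquiv e ⟨hnnLeft w, w, rfl⟩ : C ∗ F₂) = hnnRight e w := by
  have : (MonoidHom.ofInjective hnnLeft_injective).symm ⟨hnnLeft (C := C) w, w, rfl⟩ = w :=
    hnnLeft_injective (MonoidHom.apply_ofInjective_symm _ _)
  simp only [hnnEquiv, MulEquiv.trans_apply, this, MonoidHom.ofInjective_apply]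

lemma of_hnnRight (e : ℕ → C) (w : FreeGroup ℕ) :
    (HNNExtension.of (hnnRight e w) : HNNGroup e) =
      HNNExtension.t * HNNExtension.of (hnnLeft w) * HNNExtension.t⁻¹ := by
  rw [← hnnEquiv_apply, HNNExtension.equiv_eq_conj]

noncomputable def hnnGenerators (e : ℕ → C) : Fin 2 → HNNGroup e :=
  ![HNNExtension.of (Coprod.inr (of 0)), HNNExtension.t]

lemma of_inr_mem_closure_hnnGenerators {e : ℕ → C} (he0 : e 0 = 1) (w : F₂) :
    HNNExtension.of (Coprod.inr w) ∈ Subgroup.closure (Set.range (hnnGenerators e)) := by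
  set S := Subgroup.closure (Set.range (hnnGenerators e))
  have hx : HNNExtension.of (Coprod.inr (of 0)) ∈ S := Subgroup.subset_closure ⟨0, rfl⟩
  have ht : HNNExtension.t ∈ S := Subgroup.subset_closure ⟨1, rfl⟩
  suffices Subgroup.closure (Set.range (of : Fin 2 → F₂)) ≤
      S.comap (HNNExtension.of.comp Coprod.inr) from this (by simp)
  rw [Subgroup.closure_le, Set.range_subset_iff, Fin.forall_fin_two]
  refine ⟨hx, ?_⟩
  have hy := of_hnnRight e (of 0)
  rw [hnnRight_of, hnnLeft_of, he0, _root_.map_one, one_mul] at hy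
  simp only [conjPow, pow_zero, inv_one, mul_one, one_mul] at hy
  change HNNExtension.of (Coprod.inr (of 1)) ∈ S
  rw [hy]
  exact mul_mem (mul_mem ht hx) (inv_mem ht)

lemma of_inl_mem_closure_hnnGenerators {e : ℕ → C} (he0 : e 0 = 1) (n : ℕ) :
    HNNExtension.of (Coprod.inl (e n)) ∈ Subgroup.closure (Set.range (hnnGenerators e)) := by
  have ht : HNNExtension.t ∈ Subgroup.closure (Set.range (hnnGenerators e)) :=
    Subgroup.subset_closure ⟨1, rfl⟩
  have h : (HNNExtension.of (Coprod.inl (e n)) : HNNGroup e) =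
      HNNExtension.t * HNNExtension.of (Coprod.inr (conjPow (of 0) (of 1) n)) *
        HNNExtension.t⁻¹ * (HNNExtension.of (Coprod.inr (conjPow (of 1) (of 0) n)))⁻¹ := by
    rw [← hnnLeft_of, ← of_hnnRight, hnnRight_of, _root_.map_mul, mul_inv_cancel_right]
  rw [h]
  exact mul_mem (mul_mem (mul_mem ht (of_inr_mem_closure_hnnGenerators he0 _)) (inv_mem ht))
    (inv_mem (of_inr_mem_closure_hnnGenerators he0 _))

lemma closure_range_hnnGenerators {e : ℕ → C} (he : Surjective e) (he0 : e 0 = 1) :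
    Subgroup.closure (Set.range (hnnGenerators e)) = ⊤ := by
  refine (Subgroup.eq_top_iff' _).2 fun z => ?_
  induction z using HNNExtension.induction_on with
  | of g =>
    induction g using Coprod.induction_on with
    | inl c =>
      obtain ⟨n, rfl⟩ := he c
      exact of_inl_mem_closure_hnnGenerators he0 n
    | inr w => exact of_inr_mem_closure_hnnGenerators he0 w
    | mul g₁ g₂ h₁ h₂ => rw [_root_.map_mul]; exact mul_mem h₁ h₂
  | t => exact Subgroup.subset_closure ⟨1, rfl⟩
  | mul z₁ z₂ h₁ h₂ => exact mul_mem h₁ h₂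
  | inv z h => exact inv_mem h

end HigmanNeumannNeumann

lemma EmbedsInQuotient.of_surjective {G E C : Type} [Group G] [Group E] [Group C] {π : G →* E}
    (hπ : Surjective π) {ι : C →* E} (hι : Injective ι) : EmbedsInQuotient G C :=
  let q := (QuotientGroup.quotientKerEquivOfSurjective π hπ).symm
  ⟨π.ker, π.normal_ker, q.toMonoidHom.comp ι, q.injective.comp hι⟩

lemma EmbedsInQuotient.of_mulEquiv {G H C : Type} [Group G] [Group H] [Group C] (f : G ≃* H)
    (h : EmbedsInQuotient G C) : EmbedsInQuotient H C := by
  obtain ⟨N, hN, φ, hφ⟩ := h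
  have hfN : (N.map (f : G →* H)).Normal := hN.map _ f.surjective
  let q := QuotientGroup.congr N _ f rfl
  exact ⟨N.map (f : G →* H), hfN, q.toMonoidHom.comp φ, q.injective.comp hφ⟩

theorem embedsInQuotient_freeGroup_fin_two (C : Type) [Group C] [Countable C] :
    EmbedsInQuotient (FreeGroup (Fin 2)) C := by
  obtain ⟨e, he, he0⟩ := exists_surjective_nat_apply_zero_eq_one C
  refine EmbedsInQuotient.of_surjective (E := HigmanNeumannNeumann.HNNGroup e)
    (FreeGroup.lift_surjective_iff_closure_range_eq_top.2
      (HigmanNeumannNeumann.closure_range_hnnGenerators he he0))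
    (ι := HNNExtension.of.comp Monoid.Coprod.inl) ?_
  exact (HNNExtension.of_injective _).comp Monoid.Coprod.inl_injective

namespace Subgroup

variable {G : Type*} [Group G]

def HasCongruenceExtension (F : Subgroup G) : Prop :=
  ∀ N : Subgroup F, N.Normal →
    normalClosure ((N.map F.subtype : Subgroup G) : Set G) ⊓ F = N.map F.subtype

def quotientMapNormalClosure (F : Subgroup G) (N : Subgroup F) [N.Normal] :
    F ⧸ N →* G ⧸ normalClosure ((N.map F.subtype : Subgroup G) : Set G) :=
  QuotientGroup.map _ _ F.subtype (map_le_iff_le_comap.1 le_normalClosure)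

theorem HasCongruenceExtension.injective_quotientMapNormalClosure {F : Subgroup G}
    (hF : F.HasCongruenceExtension) (N : Subgroup F) [hN : N.Normal] :
    Injective (F.quotientMapNormalClosure N) := by
  have hcep := hF N hN
  set M := normalClosure ((N.map F.subtype : Subgroup G) : Set G)
  have hcomap : M.comap F.subtype = N := by
    ext n
    have : (n : G) ∈ M ⊓ F ↔ n ∈ N := by rw [hcep]; exact mem_map_iff_mem F.subtype_injective
    exact (and_iff_left n.2).symm.trans this
  rw [← MonoidHom.ker_eq_bot_iff, quotientMapNormalClosure, QuotientGroup.ker_map, hcomap,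
    QuotientGroup.map_mk'_self]

end Subgroup

lemma EmbedsInQuotient.of_hasCongruenceExtension {G C : Type} [Group G] [Group C]
    {F : Subgroup G} (hF : F.HasCongruenceExtension) (h : EmbedsInQuotient F C) :
    EmbedsInQuotient G C := by
  obtain ⟨N, hN, φ, hφ⟩ := h
  exact ⟨_, Subgroup.normalClosure_normal, (F.quotientMapNormalClosure N).comp φ,
    (hF.injective_quotientMapNormalClosure N).comp hφ⟩

/-- If `G` contains a free subgroup `F` of rank 2 with the congruence extension property
(for every normal subgroup `N` of `F`, `⟨N⟩^G ∩ F = N`), then `G` is SQ-universal: every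
countable group embeds into a quotient of `G`. -/
theorem stmt_17 (G : Type) [Group G] (F : Subgroup G)
    (hfree : Nonempty (F ≃* FreeGroup (Fin 2)))
    (hcep : ∀ N : Subgroup F, N.Normal →
      Subgroup.normalClosure ((N.map F.subtype : Subgroup G) : Set G) ⊓ F
        = N.map F.subtype) :
    ∀ (C : Type) [Group C] [Countable C], EmbedsInQuotient G C := by
  intro C _ _
  obtain ⟨f⟩ := hfree
  exact ((embedsInQuotient_freeGroup_fin_two C).of_mulEquiv f.symm).of_hasCongruenceExtension
    hcep
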